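/- There exists a finite simple graph G and a vertex v of G with deg_G(v) ≥ 2 such that γst(G/v) = γst(G) + 1; that is, the upper bound γst(G/v) ≤ γst(G) + 1 for non-pendant vertices is tight. -/

import Mathlib

/-- The degree of a vertex `x` in a graph `G`. -/
noncomputable def sdeg {V : Type*} (G : SimpleGraph V) (x : V) : ℕ :=
  (G.neighborSet x).ncard

/-- `D` is a strong dominating set of `G`: every vertex `x ∉ D` has a neighbor
`y ∈ D` with `deg x ≤ deg y`. -/
def IsStrongDominating {V : Type*} (G : SimpleGraph V) (D : Set V) : Prop :=
  ∀ x ∉ D, ∃ y ∈ D, G.Adj x y ∧ sdeg G x ≤ sdeg G y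

/-- The strong domination number of `G`. -/
noncomputable def sdn {V : Type*} (G : SimpleGraph V) : ℕ :=
  sInf {n | ∃ D : Set V, IsStrongDominating G D ∧ D.ncard = n}

/-- Vertex deletion `G - v`: the induced subgraph on the complement of `{v}`. -/
def delVtx {V : Type*} (G : SimpleGraph V) (v : V) : SimpleGraph {x : V // x ≠ v} where
  Adj a b := G.Adj a.1 b.1
  symm := ⟨fun a b h => G.symm.symm _ _ h⟩
  loopless := ⟨fun a h => G.loopless.irrefl a.1 h⟩

/-- Vertex contraction `G / v`: delete `v` and put a clique on its open neighborhood. -/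
def contractVtx {V : Type*} (G : SimpleGraph V) (v : V) : SimpleGraph {x : V // x ≠ v} where
  Adj a b := a ≠ b ∧ (G.Adj a.1 b.1 ∨ (G.Adj v a.1 ∧ G.Adj v b.1))
  symm := by
    constructor
    rintro a b ⟨hab, h | ⟨ha, hb⟩⟩
    · exact ⟨hab.symm, Or.inl h.symm⟩
    · exact ⟨hab.symm, Or.inr ⟨hb, ha⟩⟩
  loopless := by constructor; rintro a ⟨h, -⟩; exact h rfl

/-- `G ⊙ v`: remove all edges between any pair of neighbors of `v`. -/
def odotVtx {V : Type*} (G : SimpleGraph V) (v : V) : SimpleGraph V where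
  Adj x y := G.Adj x y ∧ ¬(G.Adj v x ∧ G.Adj v y)
  symm := by
    constructor
    rintro x y ⟨h, hn⟩
    exact ⟨h.symm, fun hc => hn ⟨hc.2, hc.1⟩⟩
  loopless := by constructor; rintro x ⟨h, -⟩; exact G.loopless.irrefl x h

/-- Edge contraction `G / uv`: merge `v` into `u`. -/
def contractEdge {V : Type*} (G : SimpleGraph V) (u v : V) : SimpleGraph {x : V // x ≠ v} where
  Adj a b := a ≠ b ∧ (G.Adj a.1 b.1 ∨ (a.1 = u ∧ G.Adj v b.1) ∨ (b.1 = u ∧ G.Adj v a.1))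
  symm := by
    constructor
    rintro a b ⟨hab, h | h | h⟩
    · exact ⟨hab.symm, Or.inl h.symm⟩
    · exact ⟨hab.symm, Or.inr (Or.inr h)⟩
    · exact ⟨hab.symm, Or.inr (Or.inl h)⟩
  loopless := by constructor; rintro a ⟨h, -⟩; exact h rfl

/-- The star `K_{1,n}` with center `none` and leaves `some i`. -/
def starG (n : ℕ) : SimpleGraph (Option (Fin n)) where
  Adj a b := (a = none ∧ b ≠ none) ∨ (a ≠ none ∧ b = none)
  symm := by
    constructor
    rintro a b (⟨h1, h2⟩ | ⟨h1, h2⟩)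
    · exact Or.inr ⟨h2, h1⟩
    · exact Or.inl ⟨h2, h1⟩
  loopless := by
    constructor
    rintro a (⟨h1, h2⟩ | ⟨h1, h2⟩)
    exacts [h2 h1, h1 h2]

/-- The path graph `P_n` on vertices `0, …, n-1`, consecutive integers adjacent. -/
def pathG (n : ℕ) : SimpleGraph (Fin n) where
  Adj i j := i.1 + 1 = j.1 ∨ j.1 + 1 = i.1
  symm := ⟨fun i j h => h.symm⟩
  loopless := by constructor; rintro i (h | h) <;> omega

/-! Let `G` be the 4-cycle `0 5 1 6` joined by the edge `02` to the triangle `2 3 4`. The set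
`{1, 2}` is strongly dominating, as `2` has degree 3 and so strongly dominates `0`, `3`, `4`.
The neighbours `2`, `4` of `3` are already adjacent, so contracting `3` just deletes it: in
`G / 3` the vertex `2` has degree 2 and `4` becomes pendant. Now `0` has degree 3 while its
neighbours have degree 2, so the sets `{0}`, `{2, 4}` and `{1, 5, 6}` (each a vertex with the
neighbours allowed to dominate it) must all meet a strong dominating set; being disjoint, they
force `γst(G / 3) ≥ 3`. The same argument with `{2, 3, 4}` and `{0, 1, 5}` gives `γst(G) ≥ 2`. -/

def strongClosedNbhd {V : Type*} (G : SimpleGraph V) (x : V) : Set V :=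
  insert x {y | G.Adj x y ∧ sdeg G x ≤ sdeg G y}

section StrongDomination

variable {V : Type*} (G : SimpleGraph V)

@[simp]
lemma mem_strongClosedNbhd {x y : V} :
    y ∈ strongClosedNbhd G x ↔ y = x ∨ G.Adj x y ∧ sdeg G x ≤ sdeg G y :=
  Iff.rfl

lemma sdeg_eq_degree [Fintype V] [DecidableRel G.Adj] (x : V) : sdeg G x = G.degree x := by
  rw [sdeg, ← SimpleGraph.card_neighborSet_eq_degree, Set.ncard_eq_toFinset_card',
    Set.toFinset_card]

lemma isStrongDominating_coe_iff [Fintype V] [DecidableRel G.Adj] (D : Finset V) :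
    IsStrongDominating G D ↔ ∀ x ∉ D, ∃ y ∈ D, G.Adj x y ∧ G.degree x ≤ G.degree y := by
  simp only [IsStrongDominating, Finset.mem_coe, sdeg_eq_degree]

lemma IsStrongDominating.inter_strongClosedNbhd_nonempty {G : SimpleGraph V} {D : Set V}
    (hD : IsStrongDominating G D) (x : V) : (D ∩ strongClosedNbhd G x).Nonempty := by
  by_cases hx : x ∈ D
  · exact ⟨x, hx, Set.mem_insert x _⟩
  · obtain ⟨y, hy, hadj, hdeg⟩ := hD x hx
    exact ⟨y, hy, Or.inr ⟨hadj, hdeg⟩⟩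

lemma isStrongDominating_univ : IsStrongDominating G Set.univ :=
  fun _ hx => absurd (Set.mem_univ _) hx

lemma sdn_le_ncard {D : Set V} (hD : IsStrongDominating G D) : sdn G ≤ D.ncard :=
  Nat.sInf_le ⟨D, hD, rfl⟩

lemma le_sdn {k : ℕ} (h : ∀ D, IsStrongDominating G D → k ≤ D.ncard) : k ≤ sdn G := by
  obtain ⟨D, hD, hcard⟩ : sdn G ∈ {n | ∃ D : Set V, IsStrongDominating G D ∧ D.ncard = n} :=
    Nat.sInf_mem ⟨_, Set.univ, isStrongDominating_univ G, rfl⟩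
  exact hcard ▸ h D hD

lemma card_le_sdn_of_pairwise_disjoint [Finite V] {ι : Type*} [Fintype ι] (x : ι → V)
    (hx : Pairwise fun i j => Disjoint (strongClosedNbhd G (x i)) (strongClosedNbhd G (x j))) :
    Fintype.card ι ≤ sdn G := by
  refine le_sdn G fun D hD => ?_
  choose f hfD hfN using fun i => hD.inter_strongClosedNbhd_nonempty (x i)
  have hf : Set.InjOn f Set.univ := fun i _ j _ hij => by
    by_contra hne
    exact Set.disjoint_left.mp (hx hne) (hfN i) (hij ▸ hfN j)
  simpa using Set.ncard_le_ncard_of_injOn f (fun i _ => hfD i) hf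

end StrongDomination

instance {V : Type*} [DecidableEq V] (G : SimpleGraph V) [DecidableRel G.Adj] (v : V) :
    DecidableRel (contractVtx G v).Adj := fun a b =>
  inferInstanceAs (Decidable (a ≠ b ∧ (G.Adj a.1 b.1 ∨ (G.Adj v a.1 ∧ G.Adj v b.1))))

def cycleTriangle : SimpleGraph (Fin 7) :=
  SimpleGraph.fromRel fun i j =>
    (i, j) ∈ [((0 : Fin 7), (2 : Fin 7)), (0, 5), (0, 6), (1, 5), (1, 6), (2, 3), (2, 4), (3, 4)]

instance : DecidableRel cycleTriangle.Adj := fun i j => by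
  unfold cycleTriangle; infer_instance

lemma sdn_cycleTriangle : sdn cycleTriangle = 2 := by
  refine le_antisymm ?_ ?_
  · have hD : IsStrongDominating cycleTriangle (({1, 2} : Finset (Fin 7)) : Set (Fin 7)) := by
      rw [isStrongDominating_coe_iff]; decide
    simpa using sdn_le_ncard _ hD
  · simpa using card_le_sdn_of_pairwise_disjoint cycleTriangle ![4, 5] (by
      simp only [Pairwise, Set.disjoint_left, mem_strongClosedNbhd, sdeg_eq_degree]
      decide)

lemma sdn_contractVtx_cycleTriangle : sdn (contractVtx cycleTriangle 3) = 3 := by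
  refine le_antisymm ?_ ?_
  · have hD : IsStrongDominating (contractVtx cycleTriangle 3)
        (({⟨0, by decide⟩, ⟨1, by decide⟩, ⟨2, by decide⟩} : Finset {x : Fin 7 // x ≠ 3}) :
          Set {x : Fin 7 // x ≠ 3}) := by
      rw [isStrongDominating_coe_iff]; decide
    simpa using sdn_le_ncard _ hD
  · simpa using card_le_sdn_of_pairwise_disjoint (contractVtx cycleTriangle 3)
      ![⟨0, by decide⟩, ⟨4, by decide⟩, ⟨1, by decide⟩] (by
        simp only [Pairwise, Set.disjoint_left, mem_strongClosedNbhd, sdeg_eq_degree]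
        decide)

/-- the upper bound γst(G/v) ≤ γst(G) + 1 for non-pendant vertices is tight. -/
theorem sdn_contractVtx_upper_bound_tight :
    ∃ (n : ℕ) (G : SimpleGraph (Fin n)) (v : Fin n),
      2 ≤ sdeg G v ∧ sdn (contractVtx G v) = sdn G + 1 := by
  refine ⟨7, cycleTriangle, 3, ?_, ?_⟩
  · rw [sdeg_eq_degree]; decide
  · rw [sdn_contractVtx_cycleTriangle, sdn_cycleTriangle]
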